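/- Let M₁, …, M_{k+1} (k ∈ ℕ) be matrices where each M_g = D(A_g) for some AIMD matrix A_g, and at least one g* satisfies A_{g*} = B, the full back-off matrix. Then for every nonzero z ∈ W_T, the strict contraction property ‖M_{k+1} ⋯ M₂ M₁ z‖_T < ‖z‖_T holds. -/

import Mathlib

noncomputable def l1 {n : ℕ} (z : Fin n → ℝ) : ℝ := ∑ i, |z i|

noncomputable def normT {n T : ℕ} (z : Fin T → Fin n → ℝ) : ℝ := ⨆ ℓ, l1 (z ℓ)

/-- The action of the block matrix `D(A)` on a block vector `z ∈ ℝ^{Tn}`: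
`(D(A)z)₁ = A z₁` and `(D(A)z)_r = (1/r)·A z₁ + ((r−1)/r)·z_{r−1}` for `r = 2,…,T`
(indices here are 0-based). -/
noncomputable def DApply {n T : ℕ} (A : Matrix (Fin n) (Fin n) ℝ)
    (z : Fin T → Fin n → ℝ) : Fin T → Fin n → ℝ :=
  fun r => (1 / ((r : ℕ) + 1) : ℝ) • A.mulVec (z ⟨0, r.pos⟩)
    + (((r : ℕ) : ℝ) / ((r : ℕ) + 1)) • z ⟨(r : ℕ) - 1, lt_of_le_of_lt (Nat.pred_le _) r.isLt⟩

/-- `A` is an AIMD matrix: `A = diag(β̃) + (1/n)·e·(eᵀ − β̃ᵀ)` where each `β̃ᵢ ∈ {β, 1}`. -/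
def IsAIMD (n : ℕ) (β : ℝ) (A : Matrix (Fin n) (Fin n) ℝ) : Prop :=
  ∃ b : Fin n → ℝ, (∀ i, b i = β ∨ b i = 1) ∧
    A = Matrix.diagonal b + (1 / (n : ℝ)) • Matrix.of (fun _ j => 1 - b j)

/-- The full back-off AIMD matrix `B = β·I + ((1−β)/n)·e·eᵀ`. -/
noncomputable def Bmat (n : ℕ) (β : ℝ) : Matrix (Fin n) (Fin n) ℝ :=
  β • (1 : Matrix (Fin n) (Fin n) ℝ) + ((1 - β) / (n : ℝ)) • Matrix.of (fun _ _ => (1 : ℝ))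

/-! Every AIMD matrix is column stochastic, so each `D(A)` is nonexpansive for `‖·‖_T`: block
`r` of `D(A)z` is a convex combination of `A z₁` and `z_{r-1}`, with weight `1/r` on `A z₁`.
On zero-sum vectors the full back-off matrix acts as `β • ·`, so `D(B)` even contracts by the
factor `1 - (1 - β)/T`; the zero-sum condition is preserved by every `D(A)`. -/

open Matrix

section l1

variable {n : ℕ}

lemma l1_nonneg (x : Fin n → ℝ) : 0 ≤ l1 x :=
  Finset.sum_nonneg fun _ _ => abs_nonneg _

lemma l1_add_le (x y : Fin n → ℝ) : l1 (x + y) ≤ l1 x + l1 y := by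
  rw [l1, l1, l1, ← Finset.sum_add_distrib]
  exact Finset.sum_le_sum fun i _ => abs_add_le _ _

lemma l1_smul (c : ℝ) (x : Fin n → ℝ) : l1 (c • x) = |c| * l1 x := by
  simp [l1, Finset.mul_sum, abs_mul]

lemma l1_pos {x : Fin n → ℝ} (hx : x ≠ 0) : 0 < l1 x := by
  obtain ⟨i, hi⟩ := Function.ne_iff.mp hx
  exact (abs_pos.mpr hi).trans_le <|
    Finset.single_le_sum (fun j _ => abs_nonneg (x j)) (Finset.mem_univ i)

lemma l1_mulVec_le_of_mem_colStochastic {M : Matrix (Fin n) (Fin n) ℝ}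
    (hM : M ∈ colStochastic ℝ (Fin n)) (x : Fin n → ℝ) : l1 (M *ᵥ x) ≤ l1 x :=
  calc l1 (M *ᵥ x) = ∑ i, |∑ j, M i j * x j| := rfl
    _ ≤ ∑ i, ∑ j, |M i j * x j| :=
        Finset.sum_le_sum fun i _ => Finset.abs_sum_le_sum_abs _ _
    _ = ∑ j, (∑ i, M i j) * |x j| := by
        rw [Finset.sum_comm]
        simp only [Finset.sum_mul, abs_mul, abs_of_nonneg (nonneg_of_mem_colStochastic hM)]
    _ = l1 x := by simp only [sum_col_of_mem_colStochastic hM, one_mul, l1]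

end l1

section normT

variable {n T : ℕ}

lemma l1_le_normT (z : Fin T → Fin n → ℝ) (ℓ : Fin T) : l1 (z ℓ) ≤ normT z :=
  le_ciSup (f := fun ℓ => l1 (z ℓ)) (Set.finite_range _).bddAbove ℓ

lemma normT_le [NeZero T] {z : Fin T → Fin n → ℝ} {a : ℝ} (h : ∀ ℓ, l1 (z ℓ) ≤ a) :
    normT z ≤ a :=
  ciSup_le h

lemma normT_nonneg [NeZero T] (z : Fin T → Fin n → ℝ) : 0 ≤ normT z :=
  (l1_nonneg (z 0)).trans (l1_le_normT z 0)

lemma normT_pos {z : Fin T → Fin n → ℝ} (hz : z ≠ 0) : 0 < normT z := by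
  obtain ⟨ℓ, hℓ⟩ := Function.ne_iff.mp hz
  exact (l1_pos hℓ).trans_le (l1_le_normT z ℓ)

end normT

section AIMD

variable {n : ℕ} {β : ℝ}

lemma IsAIMD.mem_colStochastic (hβ0 : 0 ≤ β) (hβ1 : β ≤ 1) {A : Matrix (Fin n) (Fin n) ℝ}
    (hA : IsAIMD n β A) : A ∈ colStochastic ℝ (Fin n) := by
  obtain ⟨b, hb, rfl⟩ := hA
  have hb0 : ∀ j, 0 ≤ b j := fun j => by rcases hb j with h | h <;> linarith
  have hb1 : ∀ j, b j ≤ 1 := fun j => by rcases hb j with h | h <;> linarith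
  refine mem_colStochastic_iff_sum.mpr ⟨fun i j => ?_, fun j => ?_⟩
  · have : 0 ≤ 1 / (n : ℝ) * (1 - b j) := mul_nonneg (by positivity) (by linarith [hb1 j])
    by_cases hij : i = j
    · subst hij
      simpa using add_nonneg (hb0 i) this
    · simpa [hij] using this
  · have hn : (n : ℝ) ≠ 0 := Nat.cast_ne_zero.mpr (Fin.pos j).ne'
    simp only [one_div, smul_of, Matrix.add_apply, diagonal_apply, of_apply, Pi.smul_apply,
      smul_eq_mul, Finset.sum_add_distrib, Finset.sum_ite_eq', Finset.mem_univ, ↓reduceIte,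
      Finset.sum_const, Finset.card_univ, Fintype.card_fin, nsmul_eq_mul]
    field_simp
    ring

lemma Bmat_mulVec {x : Fin n → ℝ} (hx : ∑ i, x i = 0) : Bmat n β *ᵥ x = β • x := by
  have hones : of (fun (_ _ : Fin n) => (1 : ℝ)) *ᵥ x = 0 := by
    funext i
    simp [mulVec, dotProduct, hx]
  rw [Bmat, add_mulVec, smul_mulVec, smul_mulVec, one_mulVec, hones, smul_zero,
    add_zero]

end AIMD

section DApply

variable {n T : ℕ}

lemma sum_DApply_eq_zero {A : Matrix (Fin n) (Fin n) ℝ} (hA : A ∈ colStochastic ℝ (Fin n))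
    {z : Fin T → Fin n → ℝ} (hz : ∀ t, ∑ i, z t i = 0) (t : Fin T) :
    ∑ i, DApply A z t i = 0 := by
  simp only [DApply, Pi.add_apply, Pi.smul_apply, smul_eq_mul, Finset.sum_add_distrib,
    ← Finset.mul_sum, sum_mulVec_of_mem_colStochastic hA, hz, mul_zero, add_zero]

/-- The worst block is the last one, where `A z₁` has the smallest weight `1/T`. -/
lemma normT_DApply_le [NeZero T] {A : Matrix (Fin n) (Fin n) ℝ} {z : Fin T → Fin n → ℝ}
    {γ : ℝ} (hγ0 : 0 ≤ γ) (hγ1 : γ ≤ 1) (hA : ∀ ℓ, l1 (A *ᵥ z ℓ) ≤ γ * l1 (z ℓ)) :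
    normT (DApply A z) ≤ (1 - (1 - γ) / T) * normT z := by
  refine normT_le fun r => ?_
  set N := normT z
  have hN : 0 ≤ N := normT_nonneg z
  have hr : (r : ℝ) + 1 ≤ T := by exact_mod_cast r.isLt
  have hAz : l1 (A *ᵥ z ⟨0, r.pos⟩) ≤ γ * N :=
    (hA _).trans (mul_le_mul_of_nonneg_left (l1_le_normT z _) hγ0)
  have hzr := l1_le_normT z ⟨(r : ℕ) - 1, by omega⟩
  calc l1 (DApply A z r)
      ≤ 1 / ((r : ℝ) + 1) * (γ * N) + (r : ℝ) / ((r : ℝ) + 1) * N := by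
        refine (l1_add_le _ _).trans ?_
        rw [l1_smul, l1_smul, abs_of_nonneg (by positivity), abs_of_nonneg (by positivity)]
        gcongr
    _ = (1 - (1 - γ) / ((r : ℝ) + 1)) * N := by field_simp; ring
    _ ≤ (1 - (1 - γ) / T) * N := by gcongr

lemma normT_DApply_le_of_mem_colStochastic [NeZero T] {A : Matrix (Fin n) (Fin n) ℝ}
    (hA : A ∈ colStochastic ℝ (Fin n)) (z : Fin T → Fin n → ℝ) :
    normT (DApply A z) ≤ normT z := by
  simpa using normT_DApply_le zero_le_one le_rfl
    fun ℓ => by simpa using l1_mulVec_le_of_mem_colStochastic hA (z ℓ)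

lemma normT_DApply_Bmat_le [NeZero T] {β : ℝ} (hβ0 : 0 ≤ β) (hβ1 : β ≤ 1)
    {z : Fin T → Fin n → ℝ} (hz : ∀ t, ∑ i, z t i = 0) :
    normT (DApply (Bmat n β) z) ≤ (1 - (1 - β) / T) * normT z :=
  normT_DApply_le hβ0 hβ1 fun ℓ => by rw [Bmat_mulVec (hz ℓ), l1_smul, abs_of_nonneg hβ0]

end DApply

section foldl

variable {n T : ℕ} {L : List (Matrix (Fin n) (Fin n) ℝ)}

lemma sum_foldl_DApply_eq_zero (hL : ∀ A ∈ L, A ∈ colStochastic ℝ (Fin n))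
    {z : Fin T → Fin n → ℝ} (hz : ∀ t, ∑ i, z t i = 0) (t : Fin T) :
    ∑ i, (L.foldl (fun v A => DApply A v) z) t i = 0 :=
  L.foldlRecOn (motive := fun (v : Fin T → Fin n → ℝ) => ∀ t, ∑ i, v t i = 0) _ hz
    (fun _ hv A hA => sum_DApply_eq_zero (hL A hA) hv) t

lemma normT_foldl_DApply_le [NeZero T] (hL : ∀ A ∈ L, A ∈ colStochastic ℝ (Fin n))
    (z : Fin T → Fin n → ℝ) : normT (L.foldl (fun v A => DApply A v) z) ≤ normT z :=
  L.foldlRecOn (motive := fun v => normT v ≤ normT z) _ le_rfl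
    fun _ hv A hA => (normT_DApply_le_of_mem_colStochastic (hL A hA) _).trans hv

lemma normT_foldl_DApply_le_of_Bmat_mem [NeZero T] {β : ℝ} (hβ0 : 0 ≤ β) (hβ1 : β ≤ 1)
    (hL : ∀ A ∈ L, A ∈ colStochastic ℝ (Fin n)) (hB : Bmat n β ∈ L)
    {z : Fin T → Fin n → ℝ} (hz : ∀ t, ∑ i, z t i = 0) :
    normT (L.foldl (fun v A => DApply A v) z) ≤ (1 - (1 - β) / T) * normT z := by
  obtain ⟨L₁, L₂, rfl⟩ := List.append_of_mem hB
  have hL₁ : ∀ A ∈ L₁, A ∈ colStochastic ℝ (Fin n) := fun A hA => hL A (by simp [hA])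
  have hL₂ : ∀ A ∈ L₂, A ∈ colStochastic ℝ (Fin n) := fun A hA => hL A (by simp [hA])
  have hc : 0 ≤ 1 - (1 - β) / T := by
    have : (1 - β) / T ≤ 1 - β :=
      div_le_self (by linarith) (by exact_mod_cast Nat.one_le_iff_ne_zero.mpr (NeZero.ne T))
    linarith
  rw [List.foldl_append, List.foldl_cons]
  calc _ ≤ normT (DApply (Bmat n β) (L₁.foldl (fun v A => DApply A v) z)) :=
        normT_foldl_DApply_le hL₂ _
    _ ≤ (1 - (1 - β) / T) * normT (L₁.foldl (fun v A => DApply A v) z) :=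
        normT_DApply_Bmat_le hβ0 hβ1 (sum_foldl_DApply_eq_zero hL₁ hz)
    _ ≤ (1 - (1 - β) / T) * normT z :=
        mul_le_mul_of_nonneg_left (normT_foldl_DApply_le hL₁ z) hc

end foldl

theorem prod_D_aimd_with_backoff_strict_contraction_general
    (n T : ℕ)
    (β : ℝ) (hβ0 : 0 < β) (hβ1 : β < 1)
    (k : ℕ) (A : Fin (k + 1) → Matrix (Fin n) (Fin n) ℝ)
    (hA : ∀ g, IsAIMD n β (A g))
    (hB : ∃ g, A g = Bmat n β)
    (z : Fin T → Fin n → ℝ)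
    (hzW : ∀ t, ∑ i, z t i = 0) (hz0 : z ≠ 0) :
    normT ((List.ofFn A).foldl (fun v Ag => DApply Ag v) z) < normT z := by
  have : NeZero T := ⟨by rintro rfl; exact hz0 (Subsingleton.elim _ _)⟩
  have hL : ∀ M ∈ List.ofFn A, M ∈ colStochastic ℝ (Fin n) := by
    simp only [List.mem_ofFn, forall_exists_index]
    rintro _ g rfl
    exact (hA g).mem_colStochastic hβ0.le hβ1.le
  have hBmem : Bmat n β ∈ List.ofFn A := List.mem_ofFn.mpr hB
  have hgap : 0 < (1 - β) / T := div_pos (by linarith) (Nat.cast_pos.mpr (NeZero.pos T))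
  calc _ ≤ (1 - (1 - β) / T) * normT z :=
        normT_foldl_DApply_le_of_Bmat_mem hβ0.le hβ1.le hL hBmem hzW
    _ < normT z := by nlinarith [normT_pos hz0]

/-- Let `M_g = D(A_g)` for AIMD matrices `A₁, …, A_{k+1}`, at least one of which is the
full back-off matrix `B`. Then `‖M_{k+1} ⋯ M₂ M₁ z‖_T < ‖z‖_T` for every nonzero
`z ∈ W_T`. (The product is applied to `z` by first applying `D(A₁)`, then `D(A₂)`, …) -/
theorem prod_D_aimd_with_backoff_strict_contraction
    (n T : ℕ) (hn : 0 < n) (hT : 0 < T)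
    (β : ℝ) (hβ0 : 0 < β) (hβ1 : β < 1)
    (k : ℕ) (A : Fin (k + 1) → Matrix (Fin n) (Fin n) ℝ)
    (hA : ∀ g, IsAIMD n β (A g))
    (hB : ∃ g, A g = Bmat n β)
    (z : Fin T → Fin n → ℝ)
    (hzW : ∀ t, ∑ i, z t i = 0) (hz0 : z ≠ 0) :
    normT ((List.ofFn A).foldl (fun v Ag => DApply Ag v) z) < normT z :=
  prod_D_aimd_with_backoff_strict_contraction_general n T β hβ0 hβ1 k A hA hB z hzW hz0
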